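/- For every real x ≥ 0, 1 - Φ(x) < 4φ(x)/(√(8 + x²) + 3x) (Sampford's upper bound). -/

import Mathlib

open MeasureTheory Real

/-- Standard Gaussian density. -/
noncomputable def gaussPdf (x : ℝ) : ℝ := Real.exp (-x ^ 2 / 2) / Real.sqrt (2 * Real.pi)

/-- Standard Gaussian distribution function. -/
noncomputable def gaussCdf (x : ℝ) : ℝ := ∫ t in Set.Iic x, gaussPdf t

/-- Finite continued fraction `hcf k g x = x + 1/(x + 2/(⋯ + k/(g x)))`,
with `hcf 0 g = g`. -/
noncomputable def hcf : ℕ → (ℝ → ℝ) → ℝ → ℝ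
  | 0, g => g
  | (k + 1), g => hcf k (fun x => x + ((k : ℝ) + 1) / g x)

/-!
The gap `R x = 4 φ(x) / (√(8 + x²) + 3x) - (1 - Φ(x))` tends to `0` at infinity, and on `[0, ∞)`
its derivative is `φ(x) (D² - 4 (x D + D')) / D²` with `D = √(8 + x²) + 3x`. Clearing the square
root, the sign of `D² - 4 (x D + D')` is that of `x³ + 6x - √(8 + x²) (x² + 2)`, which is negative
because `(√(8 + x²) (x² + 2))² = (x³ + 6x)² + 32`. So `R` strictly decreases to `0`, hence is positive.
-/

open Filter Set Topology ProbabilityTheory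

theorem StrictAntiOn.lt_of_tendsto_atTop {α β : Type*} [LinearOrder α] [NoMaxOrder α]
    [TopologicalSpace β] [LinearOrder β] [OrderClosedTopology β] {f : α → β} {a x : α} {c : β}
    (hf : StrictAntiOn f (Ici a)) (hc : Tendsto f atTop (𝓝 c)) (hx : a ≤ x) : c < f x := by
  have : Nonempty α := ⟨x⟩
  obtain ⟨y, hxy⟩ := exists_gt x
  have hay : a ≤ y := hx.trans hxy.le
  have hcy : c ≤ f y := le_of_tendsto hc <| by
    filter_upwards [eventually_ge_atTop y] with z hz
    exact hf.antitoneOn hay (hay.trans hz) hz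
  exact hcy.trans_lt (hf hx hay hxy)

lemma gaussPdf_eq_gaussianPDFReal : gaussPdf = gaussianPDFReal 0 1 := by
  ext x
  simp [gaussPdf, gaussianPDFReal, div_eq_inv_mul]

lemma gaussPdf_pos (x : ℝ) : 0 < gaussPdf x := by
  unfold gaussPdf; positivity

lemma integrable_gaussPdf : Integrable gaussPdf := by
  rw [gaussPdf_eq_gaussianPDFReal]
  exact integrable_gaussianPDFReal 0 1

lemma integral_gaussPdf : ∫ x, gaussPdf x = 1 := by
  rw [gaussPdf_eq_gaussianPDFReal]
  exact integral_gaussianPDFReal_eq_one 0 one_ne_zero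

lemma continuous_gaussPdf : Continuous gaussPdf := by
  unfold gaussPdf; fun_prop

lemma hasDerivAt_gaussPdf (x : ℝ) : HasDerivAt gaussPdf (-x * gaussPdf x) x := by
  have hexp : HasDerivAt (fun y : ℝ => -y ^ 2 / 2) (-x) x := by
    refine ((hasDerivAt_pow 2 x).neg.div_const 2).congr_deriv ?_
    push_cast; ring
  refine ((hexp.exp).div_const (Real.sqrt (2 * Real.pi))).congr_deriv ?_
  simp only [gaussPdf]
  ring

lemma tendsto_gaussPdf_atTop : Tendsto gaussPdf atTop (𝓝 0) := by
  have hexp : Tendsto (fun x : ℝ => -x ^ 2 / 2) atTop atBot :=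
    (tendsto_neg_atBot_iff.mpr (tendsto_pow_atTop two_ne_zero)).atBot_div_const two_pos
  have h := (tendsto_exp_atBot.comp hexp).div_const (Real.sqrt (2 * Real.pi))
  rwa [zero_div] at h

lemma hasDerivAt_gaussCdf (x : ℝ) : HasDerivAt gaussCdf (gaussPdf x) x := by
  have hsplit : (fun y => gaussCdf 0 + ∫ t in (0 : ℝ)..y, gaussPdf t) = gaussCdf := by
    ext y
    rw [← intervalIntegral.integral_Iic_sub_Iic integrable_gaussPdf.integrableOn
      integrable_gaussPdf.integrableOn, gaussCdf, gaussCdf]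
    ring
  rw [← hsplit]
  exact (intervalIntegral.integral_hasDerivAt_right integrable_gaussPdf.intervalIntegrable
    (continuous_gaussPdf.stronglyMeasurableAtFilter _ _) continuous_gaussPdf.continuousAt).const_add _

lemma tendsto_gaussCdf_atTop : Tendsto gaussCdf atTop (𝓝 1) := by
  have h := tendsto_setIntegral_of_monotone (μ := volume) (f := gaussPdf)
    (fun _ => measurableSet_Iic) (fun _ _ hab => Iic_subset_Iic.2 hab)
    (by rw [iUnion_Iic]; exact integrable_gaussPdf.integrableOn)
  rwa [iUnion_Iic, setIntegral_univ, integral_gaussPdf] at h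

noncomputable def sampfordDenom (x : ℝ) : ℝ := √(8 + x ^ 2) + 3 * x

noncomputable def sampfordGap (x : ℝ) : ℝ := 4 * gaussPdf x / sampfordDenom x - (1 - gaussCdf x)

lemma sampfordDenom_pos {x : ℝ} (hx : 0 ≤ x) : 0 < sampfordDenom x := by
  unfold sampfordDenom; positivity

lemma hasDerivAt_sampfordDenom (x : ℝ) :
    HasDerivAt sampfordDenom (x / √(8 + x ^ 2) + 3) x := by
  have hsq : HasDerivAt (fun y : ℝ => 8 + y ^ 2) (2 * x) x := by
    simpa using (hasDerivAt_pow 2 x).const_add 8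
  have hsqrt := (hsq.sqrt (by positivity)).add ((hasDerivAt_id x).const_mul 3)
  refine hsqrt.congr_deriv ?_
  field_simp

lemma cubic_lt_sqrt_mul (x : ℝ) : x ^ 3 + 6 * x < √(8 + x ^ 2) * (x ^ 2 + 2) := by
  have hs : √(8 + x ^ 2) ^ 2 = 8 + x ^ 2 := sq_sqrt (by positivity)
  have hsq : (√(8 + x ^ 2) * (x ^ 2 + 2)) ^ 2 = (x ^ 3 + 6 * x) ^ 2 + 32 := by
    rw [mul_pow, hs]; ring
  have hpos : 0 < √(8 + x ^ 2) * (x ^ 2 + 2) := by positivity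
  nlinarith

lemma sampfordDenom_sq_lt (x : ℝ) :
    sampfordDenom x ^ 2 < 4 * (x * sampfordDenom x + (x / √(8 + x ^ 2) + 3)) := by
  have hs : 0 < √(8 + x ^ 2) := by positivity
  have hs2 : √(8 + x ^ 2) ^ 2 = 8 + x ^ 2 := sq_sqrt (by positivity)
  have hkey := cubic_lt_sqrt_mul x
  unfold sampfordDenom
  rw [← sub_pos]
  have hid : (4 * (x * (√(8 + x ^ 2) + 3 * x) + (x / √(8 + x ^ 2) + 3))
      - (√(8 + x ^ 2) + 3 * x) ^ 2) * √(8 + x ^ 2)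
      = 2 * (√(8 + x ^ 2) * (x ^ 2 + 2) - (x ^ 3 + 6 * x)) := by
    field_simp
    linear_combination (-2 * x - √(8 + x ^ 2)) * hs2
  nlinarith

lemma hasDerivAt_sampfordGap {x : ℝ} (hx : 0 ≤ x) :
    HasDerivAt sampfordGap (gaussPdf x * (sampfordDenom x ^ 2
      - 4 * (x * sampfordDenom x + (x / √(8 + x ^ 2) + 3))) / sampfordDenom x ^ 2) x := by
  have hD := (sampfordDenom_pos hx).ne'
  have h := (((hasDerivAt_gaussPdf x).const_mul 4).div (hasDerivAt_sampfordDenom x) hD).sub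
    ((hasDerivAt_gaussCdf x).const_sub 1)
  refine h.congr_deriv ?_
  rw [sub_neg_eq_add, div_add' _ _ _ (pow_ne_zero 2 hD)]
  ring

lemma strictAntiOn_sampfordGap : StrictAntiOn sampfordGap (Ici 0) := by
  refine strictAntiOn_of_hasDerivWithinAt_neg (convex_Ici 0)
    (fun x hx => (hasDerivAt_sampfordGap hx).continuousAt.continuousWithinAt)
    (fun x hx => (hasDerivAt_sampfordGap (interior_subset hx)).hasDerivWithinAt) ?_
  intro x hx
  have hx : 0 ≤ x := interior_subset hx
  exact div_neg_of_neg_of_pos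
    (mul_neg_of_pos_of_neg (gaussPdf_pos x) (sub_neg.2 (sampfordDenom_sq_lt x)))
    (pow_pos (sampfordDenom_pos hx) 2)

lemma tendsto_sampfordDenom_atTop : Tendsto sampfordDenom atTop atTop := by
  refine tendsto_atTop_mono (fun x => ?_) (tendsto_id.const_mul_atTop three_pos)
  simp only [sampfordDenom, id]
  linarith [sqrt_nonneg (8 + x ^ 2)]

lemma tendsto_sampfordGap_atTop : Tendsto sampfordGap atTop (𝓝 0) := by
  have hfrac := (tendsto_gaussPdf_atTop.const_mul 4).div_atTop tendsto_sampfordDenom_atTop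
  have htail := tendsto_gaussCdf_atTop.const_sub 1
  have h := hfrac.sub htail
  rwa [sub_self, sub_zero] at h

/-- Sampford's upper bound. -/
theorem sampford_upper_bound (x : ℝ) (hx : 0 ≤ x) :
    1 - gaussCdf x < 4 * gaussPdf x / (Real.sqrt (8 + x ^ 2) + 3 * x) := by
  have hgap : 0 < sampfordGap x :=
    strictAntiOn_sampfordGap.lt_of_tendsto_atTop tendsto_sampfordGap_atTop hx
  rw [sampfordGap, sampfordDenom] at hgap
  linarith
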